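/- arXiv:2310.00744 — 5 statements merged into one kernel-verified Lean document; each statement's English description precedes it below -/
import Mathlib

section
/- Suppose S ∈ ℝ^{n×n} is invertible, H ∈ ℝ^{m×n}, λ > 0, and the 3×3 block matrix [[SᵀAᵀ + A·S + HᵀBᵀ + B·H, B̂_w, SᵀCᵀ + HᵀDᵀ], [B̂_wᵀ, −λ·I_p, D̂_wᵀ], [C·S + D·H, D̂_w, −I_n]] is negative definite. Then, setting K = H·S⁻¹ and P = S⁻¹, the matrix Ξ is negative definite. (This is the algebraic core of Theorem 1: feasibility of the LMI (OP₁) implies the H∞ dissipation matrix inequality Ξ ≺ 0 for the closed-loop system.) -/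
open Matrix

/-- A real square matrix `M` is negative definite if `xᵀ M x < 0` for all `x ≠ 0`. -/
def NegDef {ι : Type*} [Fintype ι] (M : Matrix ι ι ℝ) : Prop :=
  ∀ x : ι → ℝ, x ≠ 0 → x ⬝ᵥ M *ᵥ x < 0

/-- The H∞ dissipation block matrix Ξ. -/
noncomputable def Xi {n m p : ℕ} (A C : Matrix (Fin n) (Fin n) ℝ)
    (B D : Matrix (Fin n) (Fin m) ℝ) (Bw Dw : Matrix (Fin n) (Fin p) ℝ)
    (K : Matrix (Fin m) (Fin n) ℝ) (P : Matrix (Fin n) (Fin n) ℝ) (lam : ℝ) :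
    Matrix (Fin n ⊕ Fin p) (Fin n ⊕ Fin p) ℝ :=
  Matrix.fromBlocks
    ((A + B * K)ᵀ * P + Pᵀ * (A + B * K) + (C + D * K)ᵀ * (C + D * K))
    (Pᵀ * Bw + (C + D * K)ᵀ * Dw)
    (Bwᵀ * P + Dwᵀ * (C + D * K))
    (Dwᵀ * Dw - lam • (1 : Matrix (Fin p) (Fin p) ℝ))

/-!
Substituting `x₁ = S s`, `K = H S⁻¹`, `P = S⁻¹` turns `P x₁`, `A_cl x₁`, `Γ x₁` into `s`,
`(A S + B H) s`, `(C S + D H) s`. Then `xᵀ Ξ x` is the quadratic form of the LMI matrix at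
`(s, x₂, y)` with `y = Γ x₁ + D̂_w x₂`: this choice of `y` completes the square in the `-I` block,
turning `2 yᵀ(Γ x₁ + D̂_w x₂) - yᵀy` into `|Γ x₁ + D̂_w x₂|²`. The vector `(s, x₂, y)` is nonzero
whenever `x` is, as `S` is invertible.
-/

section

variable {m n : Type*} [Fintype m] [Fintype n] {α : Type*} [CommSemiring α]

theorem Matrix.dotProduct_transpose_mul_mulVec {l : Type*} [Fintype l] (A : Matrix l m α)
    (B : Matrix l n α) (x : m → α) (y : n → α) : x ⬝ᵥ (Aᵀ * B) *ᵥ y = (A *ᵥ x) ⬝ᵥ (B *ᵥ y) := by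
  rw [← mulVec_mulVec, dotProduct_mulVec, vecMul_transpose]

theorem Matrix.sumElim_dotProduct_fromBlocks_mulVec_sumElim (A : Matrix m m α)
    (B : Matrix m n α) (C : Matrix n m α) (D : Matrix n n α) (u : m → α) (v : n → α) :
    Sum.elim u v ⬝ᵥ fromBlocks A B C D *ᵥ Sum.elim u v =
      u ⬝ᵥ A *ᵥ u + u ⬝ᵥ B *ᵥ v + v ⬝ᵥ C *ᵥ u + v ⬝ᵥ D *ᵥ v := by
  simp only [fromBlocks_mulVec, Sum.elim_comp_inl, Sum.elim_comp_inr, sumElim_dotProduct_sumElim,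
    dotProduct_add]
  ring

end

theorem Matrix.add_mul_mul_nonsing_inv_mulVec {l m n : Type*} [Fintype m] [Fintype n]
    [DecidableEq n] {S : Matrix n n ℝ} (hS : IsUnit S) (M : Matrix l n ℝ) (N : Matrix l m ℝ)
    (H : Matrix m n ℝ) (v : n → ℝ) :
    (M + N * (H * S⁻¹)) *ᵥ (S *ᵥ v) = (M * S + N * H) *ᵥ v := by
  rw [mulVec_mulVec, Matrix.add_mul, Matrix.mul_assoc, Matrix.mul_assoc,
    nonsing_inv_mul S ((isUnit_iff_isUnit_det S).mp hS), Matrix.mul_one]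

section

variable {n m p : ℕ} (A C : Matrix (Fin n) (Fin n) ℝ) (B D : Matrix (Fin n) (Fin m) ℝ)
  (Bw Dw : Matrix (Fin n) (Fin p) ℝ) (lam : ℝ)

theorem Xi_quadForm (K : Matrix (Fin m) (Fin n) ℝ) (P : Matrix (Fin n) (Fin n) ℝ)
    (x₁ : Fin n → ℝ) (x₂ : Fin p → ℝ) :
    Sum.elim x₁ x₂ ⬝ᵥ Xi A C B D Bw Dw K P lam *ᵥ Sum.elim x₁ x₂ =
      2 * ((P *ᵥ x₁) ⬝ᵥ ((A + B * K) *ᵥ x₁ + Bw *ᵥ x₂))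
        + ((C + D * K) *ᵥ x₁ + Dw *ᵥ x₂) ⬝ᵥ ((C + D * K) *ᵥ x₁ + Dw *ᵥ x₂)
        - lam * (x₂ ⬝ᵥ x₂) := by
  rw [Xi, sumElim_dotProduct_fromBlocks_mulVec_sumElim]
  generalize A + B * K = Acl, C + D * K = Γ
  simp only [add_mulVec, sub_mulVec, dotProduct_add, dotProduct_sub, add_dotProduct,
    dotProduct_transpose_mul_mulVec, smul_mulVec, one_mulVec, dotProduct_smul, smul_eq_mul]
  rw [dotProduct_comm (Acl *ᵥ x₁), dotProduct_comm (Bw *ᵥ x₂), dotProduct_comm (Dw *ᵥ x₂)]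
  ring

/-- The matrix of the LMI (OP₁). -/
noncomputable def lmiMatrix (S : Matrix (Fin n) (Fin n) ℝ) (H : Matrix (Fin m) (Fin n) ℝ) :
    Matrix (Fin n ⊕ (Fin p ⊕ Fin n)) (Fin n ⊕ (Fin p ⊕ Fin n)) ℝ :=
  fromBlocks (Sᵀ * Aᵀ + A * S + Hᵀ * Bᵀ + B * H) (fromCols Bw (Sᵀ * Cᵀ + Hᵀ * Dᵀ))
    (fromRows Bwᵀ (C * S + D * H)) (fromBlocks (-lam • (1 : Matrix (Fin p) (Fin p) ℝ)) Dwᵀ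
      Dw (-(1 : Matrix (Fin n) (Fin n) ℝ)))

theorem lmiMatrix_quadForm (S : Matrix (Fin n) (Fin n) ℝ) (H : Matrix (Fin m) (Fin n) ℝ)
    (s : Fin n → ℝ) (w : Fin p → ℝ) (y : Fin n → ℝ) :
    Sum.elim s (Sum.elim w y) ⬝ᵥ lmiMatrix A C B D Bw Dw lam S H *ᵥ Sum.elim s (Sum.elim w y) =
      2 * (s ⬝ᵥ ((A * S + B * H) *ᵥ s + Bw *ᵥ w))
        + 2 * (y ⬝ᵥ ((C * S + D * H) *ᵥ s + Dw *ᵥ w)) - lam * (w ⬝ᵥ w) - y ⬝ᵥ y := by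
  rw [lmiMatrix, sumElim_dotProduct_fromBlocks_mulVec_sumElim,
    sumElim_dotProduct_fromBlocks_mulVec_sumElim]
  simp only [fromCols_mulVec_sumElim, fromRows_mulVec, sumElim_dotProduct_sumElim, add_mulVec,
    dotProduct_add, ← transpose_mul, dotProduct_transpose_mulVec,
    neg_smul, neg_mulVec, smul_mulVec, one_mulVec, dotProduct_neg, dotProduct_smul, smul_eq_mul]
  ring

end

theorem stmt0_general {n m p : ℕ} (A C : Matrix (Fin n) (Fin n) ℝ)
    (B D : Matrix (Fin n) (Fin m) ℝ) (Bw Dw : Matrix (Fin n) (Fin p) ℝ)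
    (S : Matrix (Fin n) (Fin n) ℝ) (H : Matrix (Fin m) (Fin n) ℝ) (lam : ℝ)
    (hS : IsUnit S)
    (hLMI : NegDef (Matrix.fromBlocks
      (Sᵀ * Aᵀ + A * S + Hᵀ * Bᵀ + B * H)
      (Matrix.fromCols Bw (Sᵀ * Cᵀ + Hᵀ * Dᵀ))
      (Matrix.fromRows Bwᵀ (C * S + D * H))
      (Matrix.fromBlocks (-lam • (1 : Matrix (Fin p) (Fin p) ℝ)) Dwᵀ
        Dw (-(1 : Matrix (Fin n) (Fin n) ℝ))))) :
    NegDef (Xi A C B D Bw Dw (H * S⁻¹) S⁻¹ lam) := by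
  intro x hx
  obtain ⟨x₁, x₂, rfl⟩ : ∃ x₁ x₂, x = Sum.elim x₁ x₂ := ⟨_, _, (Sum.elim_comp_inl_inr x).symm⟩
  obtain ⟨s, rfl⟩ : ∃ s, x₁ = S *ᵥ s := ⟨S⁻¹ *ᵥ x₁, by
    rw [mulVec_mulVec, mul_nonsing_inv S ((isUnit_iff_isUnit_det S).mp hS), one_mulVec]⟩
  have hPs : S⁻¹ *ᵥ (S *ᵥ s) = s := by
    rw [mulVec_mulVec, nonsing_inv_mul S ((isUnit_iff_isUnit_det S).mp hS), one_mulVec]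
  set y := (C * S + D * H) *ᵥ s + Dw *ᵥ x₂
  have hz : Sum.elim s (Sum.elim x₂ y) ≠ 0 := by
    intro h
    have hs : s = 0 := funext fun i => congrFun h (.inl i)
    have hx₂ : x₂ = 0 := funext fun i => congrFun h (.inr (.inl i))
    simp [hs, hx₂] at hx
  calc _ = Sum.elim s (Sum.elim x₂ y) ⬝ᵥ lmiMatrix A C B D Bw Dw lam S H *ᵥ
        Sum.elim s (Sum.elim x₂ y) := by
        rw [Xi_quadForm, lmiMatrix_quadForm, hPs, add_mul_mul_nonsing_inv_mulVec hS,
          add_mul_mul_nonsing_inv_mulVec hS]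
        ring
    _ < 0 := hLMI _ hz

/-- Feasibility of the LMI (OP₁) implies Ξ ≺ 0 with `K = H·S⁻¹`, `P = S⁻¹`. -/
theorem stmt0 {n m p : ℕ} (A C : Matrix (Fin n) (Fin n) ℝ)
    (B D : Matrix (Fin n) (Fin m) ℝ) (Bw Dw : Matrix (Fin n) (Fin p) ℝ)
    (S : Matrix (Fin n) (Fin n) ℝ) (H : Matrix (Fin m) (Fin n) ℝ) (lam : ℝ)
    (hS : IsUnit S) (hlam : 0 < lam)
    (hLMI : NegDef (Matrix.fromBlocks
      (Sᵀ * Aᵀ + A * S + Hᵀ * Bᵀ + B * H)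
      (Matrix.fromCols Bw (Sᵀ * Cᵀ + Hᵀ * Dᵀ))
      (Matrix.fromRows Bwᵀ (C * S + D * H))
      (Matrix.fromBlocks (-lam • (1 : Matrix (Fin p) (Fin p) ℝ)) Dwᵀ
        Dw (-(1 : Matrix (Fin n) (Fin n) ℝ))))) :
    NegDef (Xi A C B D Bw Dw (H * S⁻¹) S⁻¹ lam) :=
  stmt0_general A C B D Bw Dw S H lam hS hLMI
end

section
/- Let E ∈ ℝ^{n×n}, E^⊥ ∈ ℝ^{n×a} with E·E^⊥ = 0, let X ∈ ℝ^{n×n} be symmetric positive semidefinite, and let W ∈ ℝ^{a×n}. If S = X·Eᵀ + E^⊥·W is invertible and P = S⁻¹, then EᵀP = PᵀE = Pᵀ·E·X·Eᵀ·P, and in particular EᵀP is positive semidefinite. (This shows that the parametrization S = XEᵀ + E^⊥W used in Theorem 1 guarantees the Lyapunov condition EᵀP = PᵀE ⪰ 0.) -/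
/-!
Since `E·E^⊥ = 0`, `E·S = E·X·Eᵀ`; multiplying by `Pᵀ` on the left and `P` on the right and
using `S·P = 1` gives `(EᵀP)ᵀ = (EᵀP)ᵀ·X·(EᵀP)`. The right-hand side is a congruence of the
positive semidefinite `X`, so `(EᵀP)ᵀ` is positive semidefinite, in particular symmetric,
which forces `EᵀP = PᵀE`.
-/

open Matrix

namespace Matrix

variable {k l m n : Type*} [Fintype n]

theorem mul_mul_add_mul_eq_of_mul_eq_zero {R : Type*} [Semiring R] [Fintype l]
    {E : Matrix k n R} {Eperp : Matrix n l R} (hperp : E * Eperp = 0)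
    (X : Matrix n n R) (Y : Matrix n m R) (W : Matrix l m R) :
    E * (X * Y + Eperp * W) = E * X * Y := by
  rw [Matrix.mul_add, ← Matrix.mul_assoc, ← Matrix.mul_assoc, hperp, Matrix.zero_mul, add_zero]

theorem transpose_eq_transpose_mul_mul_of_mul_eq_one {R : Type*} [CommSemiring R]
    [Fintype k] [DecidableEq n] {E : Matrix k n R} {X : Matrix n n R} {S : Matrix n k R}
    {P : Matrix k n R} (hSP : S * P = 1) (hES : E * S = E * X * Eᵀ) :
    (Eᵀ * P)ᵀ = (Eᵀ * P)ᵀ * X * (Eᵀ * P) :=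
  calc (Eᵀ * P)ᵀ = Pᵀ * (E * S) * P := by
        rw [transpose_mul, transpose_transpose, Matrix.mul_assoc, Matrix.mul_assoc, hSP,
          Matrix.mul_one]
    _ = (Eᵀ * P)ᵀ * X * (Eᵀ * P) := by
        rw [hES, transpose_mul, transpose_transpose]; simp only [Matrix.mul_assoc]

theorem PosSemidef.of_conjTranspose_eq_conjTranspose_mul_mul {R : Type*} [Ring R]
    [PartialOrder R] [StarRing R] {X Q : Matrix n n R} (hX : X.PosSemidef)
    (hQ : Qᴴ = Qᴴ * X * Q) :
    Q = Qᴴ ∧ Q.PosSemidef := by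
  have hQH : Qᴴ.PosSemidef := hQ ▸ hX.conjTranspose_mul_mul_same Q
  have hself : Q = Qᴴ := by
    simpa only [conjTranspose_conjTranspose] using hQH.isHermitian.eq
  exact ⟨hself, hself ▸ hQH⟩

end Matrix

/-- If `E·E^⊥ = 0`, `X` is symmetric positive semidefinite, and
`S = X·Eᵀ + E^⊥·W` is invertible with `P = S⁻¹`, then
`EᵀP = PᵀE = Pᵀ·E·X·Eᵀ·P`; in particular `EᵀP` is positive semidefinite. -/
theorem stmt1 {n a : ℕ} (E : Matrix (Fin n) (Fin n) ℝ)
    (Eperp : Matrix (Fin n) (Fin a) ℝ) (hperp : E * Eperp = 0)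
    (X : Matrix (Fin n) (Fin n) ℝ) (hX : X.PosSemidef)
    (W : Matrix (Fin a) (Fin n) ℝ)
    (S : Matrix (Fin n) (Fin n) ℝ) (hSdef : S = X * Eᵀ + Eperp * W)
    (hS : IsUnit S)
    (P : Matrix (Fin n) (Fin n) ℝ) (hP : P = S⁻¹) :
    Eᵀ * P = Pᵀ * E ∧ Pᵀ * E = Pᵀ * E * X * Eᵀ * P ∧ (Eᵀ * P).PosSemidef := by
  have hSP : S * P = 1 := hP ▸ mul_nonsing_inv S ((isUnit_iff_isUnit_det S).mp hS)
  have hES : E * S = E * X * Eᵀ := hSdef ▸ mul_mul_add_mul_eq_of_mul_eq_zero hperp X Eᵀ W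
  have hfix := transpose_eq_transpose_mul_mul_of_mul_eq_one hSP hES
  rw [← conjTranspose_eq_transpose_of_trivial] at hfix
  obtain ⟨hsymm, hpsd⟩ := PosSemidef.of_conjTranspose_eq_conjTranspose_mul_mul hX hfix
  rw [conjTranspose_eq_transpose_of_trivial, transpose_mul, transpose_transpose] at hsymm hfix
  exact ⟨hsymm, hfix.trans (by simp only [Matrix.mul_assoc]), hpsd⟩
end

section
/- Let n = n_d + n_a, let Θ, Ω ∈ ℝ^{n×n} be invertible, let E = Θ⁻¹ · [[I_{n_d}, 0], [0, 0]] · Ω⁻¹, and let P = Θᵀ · [[P₁, P₂], [P₃, P₄]] · Ω⁻¹ with blocks P₁ ∈ ℝ^{n_d×n_d}, P₂ ∈ ℝ^{n_d×n_a}, P₃ ∈ ℝ^{n_a×n_d}, P₄ ∈ ℝ^{n_a×n_a}. Then EᵀP = PᵀE holds if and only if P₂ = 0 and P₁ = P₁ᵀ. -/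
/-!
With `J = [[I, 0], [0, 0]]` and `B = [[P₁, P₂], [P₃, P₄]]`, `Θ` cancels: `EᵀP = Ω⁻ᵀ (J B) Ω⁻¹`,
while `PᵀE = (EᵀP)ᵀ` always. Congruence by the invertible `Ω⁻¹` preserves and reflects symmetry,
so the identity holds iff `J B = [[P₁, P₂], [0, 0]]` is symmetric, i.e. `P₂ = 0` and `P₁ = P₁ᵀ`.
-/

open Matrix

namespace Matrix

theorem fromBlocks_one_zero_zero_zero_mul {l m n α : Type*} [Fintype l] [Fintype m]
    [DecidableEq l] [Semiring α]
    (A : Matrix l l α) (B : Matrix l n α) (C : Matrix m l α) (D : Matrix m n α) :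
    fromBlocks (1 : Matrix l l α) 0 0 (0 : Matrix m m α) * fromBlocks A B C D =
      fromBlocks A B 0 0 := by
  simp [fromBlocks_multiply]

theorem isSymm_transpose_mul_mul_iff {n α : Type*} [Fintype n] [DecidableEq n] [CommSemiring α]
    {D : Matrix n n α} (hD : IsUnit D) {M : Matrix n n α} :
    (Dᵀ * M * D).IsSymm ↔ M.IsSymm := by
  have hDt : IsUnit Dᵀ := (isUnit_transpose D).mpr hD
  rw [IsSymm, transpose_mul, transpose_mul, transpose_transpose, ← Matrix.mul_assoc,
    hD.mul_left_inj, hDt.mul_right_inj, IsSymm]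

theorem transpose_nonsing_inv_mul_transpose_mul_cancel {n m α : Type*} [Fintype n]
    [DecidableEq n] [CommRing α] {A : Matrix n n α} (hA : IsUnit A) (B : Matrix n m α) :
    A⁻¹ᵀ * (Aᵀ * B) = B := by
  rw [transpose_nonsing_inv, nonsing_inv_mul_cancel_left]
  rwa [det_transpose, ← isUnit_iff_isUnit_det]

end Matrix

/-- With `E = Θ⁻¹·[[I,0],[0,0]]·Ω⁻¹` and `P = Θᵀ·[[P₁,P₂],[P₃,P₄]]·Ω⁻¹` (Θ, Ω invertible),
`EᵀP = PᵀE` holds iff `P₂ = 0` and `P₁ = P₁ᵀ`. -/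
theorem stmt5 {nd na : ℕ}
    (Θ Ω : Matrix (Fin nd ⊕ Fin na) (Fin nd ⊕ Fin na) ℝ)
    (hΘ : IsUnit Θ) (hΩ : IsUnit Ω)
    (P1 : Matrix (Fin nd) (Fin nd) ℝ) (P2 : Matrix (Fin nd) (Fin na) ℝ)
    (P3 : Matrix (Fin na) (Fin nd) ℝ) (P4 : Matrix (Fin na) (Fin na) ℝ)
    (E P : Matrix (Fin nd ⊕ Fin na) (Fin nd ⊕ Fin na) ℝ)
    (hE : E = Θ⁻¹ * Matrix.fromBlocks (1 : Matrix (Fin nd) (Fin nd) ℝ) 0 0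
      (0 : Matrix (Fin na) (Fin na) ℝ) * Ω⁻¹)
    (hP : P = Θᵀ * Matrix.fromBlocks P1 P2 P3 P4 * Ω⁻¹) :
    Eᵀ * P = Pᵀ * E ↔ (P2 = 0 ∧ P1 = P1ᵀ) := by
  have hPE : Pᵀ * E = (Eᵀ * P)ᵀ := by rw [transpose_mul, transpose_transpose]
  have hEP : Eᵀ * P = Ω⁻¹ᵀ * fromBlocks P1 P2 0 0 * Ω⁻¹ := by
    rw [hE, hP, ← fromBlocks_one_zero_zero_zero_mul P1 P2 P3 P4]
    simp only [transpose_mul, fromBlocks_transpose, transpose_one, transpose_zero,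
      Matrix.mul_assoc, transpose_nonsing_inv_mul_transpose_mul_cancel hΘ]
  rw [hPE, eq_comm, ← IsSymm, hEP, isSymm_transpose_mul_mul_iff (isUnit_nonsing_inv_iff.mpr hΩ),
    isSymm_fromBlocks_iff, IsSymm, eq_comm (a := P1)]
  simp only [transpose_eq_zero, transpose_zero, isSymm_zero, and_true]
  tauto
end

section
/- Let n = n_d + n_a, let Θ, Ω ∈ ℝ^{n×n} be invertible, let E = Θ⁻¹ · [[I_{n_d}, 0], [0, 0]] · Ω⁻¹, and let P = Θᵀ · [[P₁, 0], [P₃, P₄]] · Ω⁻¹ where P₁ ∈ ℝ^{n_d×n_d} and P₄ ∈ ℝ^{n_a×n_a} are invertible and P₃ ∈ ℝ^{n_a×n_d}. Define X = Ω · [[P₁⁻¹, 0], [0, I_{n_a}]] · Ωᵀ ∈ ℝ^{n×n}, E^⊥ = Ω · [0; I_{n_a}] ∈ ℝ^{n×n_a} (the n×n_a matrix whose top n_d×n_a block is 0 and bottom n_a×n_a block is I), and W = [−P₄⁻¹·P₃·P₁⁻¹, P₄⁻¹] · (Θ⁻¹)ᵀ ∈ ℝ^{n_a×n}. Then P is invertible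 and P⁻¹ = X·Eᵀ + E^⊥·W. -/
/-!
Since `P = Θᵀ B Ω⁻¹` with `B = [[P₁, 0], [P₃, P₄]]`, we get `P⁻¹ = Ω B⁻¹ (Θ⁻¹)ᵀ`, and `B⁻¹` is
lower block-triangular with diagonal blocks `P₁⁻¹`, `P₄⁻¹` and off-diagonal block
`-P₄⁻¹ P₃ P₁⁻¹`. Splitting `B⁻¹` into its first block column, `diag(P₁⁻¹, I) · diag(I, 0)`, and the
rest, `[0; I] · [-P₄⁻¹ P₃ P₁⁻¹, P₄⁻¹]`, gives the two summands: in the first, the factor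
`Ωᵀ (Ω⁻¹)ᵀ = 1` hidden in `X Eᵀ` cancels.
-/

open Matrix

namespace Matrix

variable {m n R : Type*} [Fintype m] [Fintype n] [DecidableEq m] [DecidableEq n]

theorem fromBlocks_zero₁₂_eq_mul_add [Ring R] (A : Matrix m m R) (C : Matrix n m R)
    (D : Matrix n n R) :
    fromBlocks A 0 C D =
      fromBlocks A 0 0 1 * fromBlocks 1 0 0 0 + fromRows (0 : Matrix m n R) 1 * fromCols C D := by
  rw [fromRows_mul_fromCols, fromBlocks_multiply, fromBlocks_add]
  simp

variable [CommRing R]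

theorem inv_transpose_mul_mul_inv (Θ B Ω : Matrix n n R) (hΩ : IsUnit Ω) :
    (Θᵀ * B * Ω⁻¹)⁻¹ = Ω * B⁻¹ * (Θ⁻¹)ᵀ := by
  rw [mul_inv_rev, mul_inv_rev, nonsing_inv_nonsing_inv _ ((isUnit_iff_isUnit_det _).mp hΩ),
    transpose_nonsing_inv, mul_assoc]

theorem mul_mul_transpose_mul_transpose_mul_inv (Ω D M J : Matrix n n R) (hΩ : IsUnit Ω) :
    Ω * D * Ωᵀ * (M * J * Ω⁻¹)ᵀ = Ω * (D * Jᵀ) * Mᵀ := by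
  have hΩΩ : Ωᵀ * (Ω⁻¹)ᵀ = 1 := by
    rw [← transpose_mul, nonsing_inv_mul _ ((isUnit_iff_isUnit_det _).mp hΩ), transpose_one]
  simp only [transpose_mul, mul_assoc]
  rw [← mul_assoc Ωᵀ, hΩΩ, one_mul]

end Matrix

/-- With `E = Θ⁻¹·[[I,0],[0,0]]·Ω⁻¹`, `P = Θᵀ·[[P₁,0],[P₃,P₄]]·Ω⁻¹` (Θ, Ω, P₁, P₄
invertible), `X = Ω·[[P₁⁻¹,0],[0,I]]·Ωᵀ`, `E^⊥ = Ω·[0; I]`, and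
`W = [−P₄⁻¹P₃P₁⁻¹, P₄⁻¹]·(Θ⁻¹)ᵀ`, the matrix `P` is invertible and
`P⁻¹ = X·Eᵀ + E^⊥·W`. -/
theorem stmt6 {nd na : ℕ}
    (Θ Ω : Matrix (Fin nd ⊕ Fin na) (Fin nd ⊕ Fin na) ℝ)
    (hΘ : IsUnit Θ) (hΩ : IsUnit Ω)
    (P1 : Matrix (Fin nd) (Fin nd) ℝ) (hP1 : IsUnit P1)
    (P3 : Matrix (Fin na) (Fin nd) ℝ)
    (P4 : Matrix (Fin na) (Fin na) ℝ) (hP4 : IsUnit P4)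
    (E P : Matrix (Fin nd ⊕ Fin na) (Fin nd ⊕ Fin na) ℝ)
    (hE : E = Θ⁻¹ * Matrix.fromBlocks (1 : Matrix (Fin nd) (Fin nd) ℝ) 0 0
      (0 : Matrix (Fin na) (Fin na) ℝ) * Ω⁻¹)
    (hP : P = Θᵀ * Matrix.fromBlocks P1 0 P3 P4 * Ω⁻¹)
    (X : Matrix (Fin nd ⊕ Fin na) (Fin nd ⊕ Fin na) ℝ)
    (hX : X = Ω * Matrix.fromBlocks P1⁻¹ 0 0 (1 : Matrix (Fin na) (Fin na) ℝ) * Ωᵀ)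
    (Eperp : Matrix (Fin nd ⊕ Fin na) (Fin na) ℝ)
    (hEperp : Eperp = Ω * Matrix.fromRows (0 : Matrix (Fin nd) (Fin na) ℝ)
      (1 : Matrix (Fin na) (Fin na) ℝ))
    (W : Matrix (Fin na) (Fin nd ⊕ Fin na) ℝ)
    (hW : W = Matrix.fromCols (-(P4⁻¹ * P3 * P1⁻¹)) P4⁻¹ * (Θ⁻¹)ᵀ) :
    IsUnit P ∧ P⁻¹ = X * Eᵀ + Eperp * W := by
  subst hP hE hX hEperp hW
  refine ⟨?_, ?_⟩
  · exact ((isUnit_transpose Θ).mpr hΘ |>.mul (isUnit_fromBlocks_zero₁₂.mpr ⟨hP1, hP4⟩)).mul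
      (isUnit_nonsing_inv_iff.mpr hΩ)
  · rw [inv_transpose_mul_mul_inv _ _ _ hΩ,
      inv_fromBlocks_zero₁₂_of_isUnit_iff _ _ _ (iff_of_true hP1 hP4),
      fromBlocks_zero₁₂_eq_mul_add, mul_mul_transpose_mul_transpose_mul_inv _ _ _ _ hΩ,
      fromBlocks_transpose]
    simp only [transpose_one, transpose_zero, mul_add, add_mul, Matrix.mul_assoc]
end

section
/- Suppose F := μ²·I_p − D̃_wᵀD̃_w is invertible. Define Ā = Ã + B̃_w·F⁻¹·D̃_wᵀ·C̃, B̄ = B̃ + B̃_w·F⁻¹·D̃_wᵀ·D̃, Q = C̃ᵀ·(I + D̃_w·F⁻¹·D̃_wᵀ)·C̃, R = D̃ᵀ·(I + D̃_w·F⁻¹·D̃_wᵀ)·D̃, S = C̃ᵀ·(I + D̃_w·F⁻¹·D̃_wᵀ)·D̃, and G = B̃_w·F⁻¹·B̃_wᵀ. Then for every P ∈ ℝ^{d×d} and K ∈ ℝ^{m×d}: Ã_clᵀP + P·Ã_cl + Γ̃ᵀΓ̃ + (P·B̃_w + Γ̃ᵀD̃_w)·F⁻¹·(B̃_wᵀP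 + D̃_wᵀΓ̃) = ĀᵀP + PĀ + Q + PGP + KᵀRK + Kᵀ(B̄ᵀP + Sᵀ) + (PB̄ + S)K. (This identity converts the Schur-complemented H∞ inequality into the Riccati form used to define OP₂.) -/
open Matrix

/- With `Γ = C + D K` and `M = 1 + Dw E Dwᵀ`, the `Γᵀ Γ` and `Γᵀ Dw E Dwᵀ Γ` terms combine to
`Γᵀ M Γ`, whose expansion gives the `Q`, `R` and `S` terms; the symmetry of `E` identifies
`(P Bw E Dwᵀ Γ)ᵀ` with `Γᵀ Dw E Bwᵀ P`, which supplies the `Ā` and `B̄` corrections. -/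
theorem closedLoop_quadratic_eq_riccati {ι κ π R : Type*} [Fintype ι] [Fintype κ] [Fintype π]
    [DecidableEq ι] [CommRing R] (A C : Matrix ι ι R) (B D : Matrix ι κ R)
    (Bw Dw : Matrix ι π R) (E : Matrix π π R) (hE : E.IsSymm)
    (P : Matrix ι ι R) (K : Matrix κ ι R) :
    (A + B * K)ᵀ * P + P * (A + B * K) + (C + D * K)ᵀ * (C + D * K)
        + (P * Bw + (C + D * K)ᵀ * Dw) * E * (Bwᵀ * P + Dwᵀ * (C + D * K))
      = (A + Bw * E * Dwᵀ * C)ᵀ * P + P * (A + Bw * E * Dwᵀ * C)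
        + Cᵀ * (1 + Dw * E * Dwᵀ) * C + P * (Bw * E * Bwᵀ) * P
        + Kᵀ * (Dᵀ * (1 + Dw * E * Dwᵀ) * D) * K
        + Kᵀ * ((B + Bw * E * Dwᵀ * D)ᵀ * P + (Cᵀ * (1 + Dw * E * Dwᵀ) * D)ᵀ)
        + (P * (B + Bw * E * Dwᵀ * D) + Cᵀ * (1 + Dw * E * Dwᵀ) * D) * K := by
  simp only [transpose_add, transpose_mul, transpose_transpose, hE.eq,
    Matrix.add_mul, Matrix.mul_add, Matrix.mul_one, ← Matrix.mul_assoc]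
  abel

theorem stmt15_general {d m p : ℕ} (At Ct : Matrix (Fin d) (Fin d) ℝ)
    (Bt Dt : Matrix (Fin d) (Fin m) ℝ) (Bw Dw : Matrix (Fin d) (Fin p) ℝ)
    (μ : ℝ) (F : Matrix (Fin p) (Fin p) ℝ)
    (hF : F = μ ^ 2 • (1 : Matrix (Fin p) (Fin p) ℝ) - Dwᵀ * Dw)
    (Abar : Matrix (Fin d) (Fin d) ℝ) (hAbar : Abar = At + Bw * F⁻¹ * Dwᵀ * Ct)
    (Bbar : Matrix (Fin d) (Fin m) ℝ) (hBbar : Bbar = Bt + Bw * F⁻¹ * Dwᵀ * Dt)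
    (Q : Matrix (Fin d) (Fin d) ℝ)
    (hQ : Q = Ctᵀ * ((1 : Matrix (Fin d) (Fin d) ℝ) + Dw * F⁻¹ * Dwᵀ) * Ct)
    (R : Matrix (Fin m) (Fin m) ℝ)
    (hR : R = Dtᵀ * ((1 : Matrix (Fin d) (Fin d) ℝ) + Dw * F⁻¹ * Dwᵀ) * Dt)
    (S : Matrix (Fin d) (Fin m) ℝ)
    (hS : S = Ctᵀ * ((1 : Matrix (Fin d) (Fin d) ℝ) + Dw * F⁻¹ * Dwᵀ) * Dt)
    (G : Matrix (Fin d) (Fin d) ℝ) (hG : G = Bw * F⁻¹ * Bwᵀ) :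
    ∀ (P : Matrix (Fin d) (Fin d) ℝ) (K : Matrix (Fin m) (Fin d) ℝ),
      (At + Bt * K)ᵀ * P + P * (At + Bt * K)
          + (Ct + Dt * K)ᵀ * (Ct + Dt * K)
          + (P * Bw + (Ct + Dt * K)ᵀ * Dw) * F⁻¹
            * (Bwᵀ * P + Dwᵀ * (Ct + Dt * K))
        = Abarᵀ * P + P * Abar + Q + P * G * P + Kᵀ * R * K
          + Kᵀ * (Bbarᵀ * P + Sᵀ) + (P * Bbar + S) * K := by
  intro P K
  have hF_symm : F.IsSymm := hF ▸ (isSymm_one.smul _).sub (by rw [IsSymm, transpose_mul, transpose_transpose])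
  subst hAbar hBbar hQ hR hS hG
  exact closedLoop_quadratic_eq_riccati At Ct Bt Dt Bw Dw F⁻¹ hF_symm.inv P K

/-- The identity converting the Schur-complemented H∞ inequality into the
Riccati form used to define OP₂. -/
theorem stmt15 {d m p : ℕ} (At Ct : Matrix (Fin d) (Fin d) ℝ)
    (Bt Dt : Matrix (Fin d) (Fin m) ℝ) (Bw Dw : Matrix (Fin d) (Fin p) ℝ)
    (μ : ℝ) (F : Matrix (Fin p) (Fin p) ℝ)
    (hF : F = μ ^ 2 • (1 : Matrix (Fin p) (Fin p) ℝ) - Dwᵀ * Dw)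
    (hFunit : IsUnit F)
    (Abar : Matrix (Fin d) (Fin d) ℝ) (hAbar : Abar = At + Bw * F⁻¹ * Dwᵀ * Ct)
    (Bbar : Matrix (Fin d) (Fin m) ℝ) (hBbar : Bbar = Bt + Bw * F⁻¹ * Dwᵀ * Dt)
    (Q : Matrix (Fin d) (Fin d) ℝ)
    (hQ : Q = Ctᵀ * ((1 : Matrix (Fin d) (Fin d) ℝ) + Dw * F⁻¹ * Dwᵀ) * Ct)
    (R : Matrix (Fin m) (Fin m) ℝ)
    (hR : R = Dtᵀ * ((1 : Matrix (Fin d) (Fin d) ℝ) + Dw * F⁻¹ * Dwᵀ) * Dt)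
    (S : Matrix (Fin d) (Fin m) ℝ)
    (hS : S = Ctᵀ * ((1 : Matrix (Fin d) (Fin d) ℝ) + Dw * F⁻¹ * Dwᵀ) * Dt)
    (G : Matrix (Fin d) (Fin d) ℝ) (hG : G = Bw * F⁻¹ * Bwᵀ) :
    ∀ (P : Matrix (Fin d) (Fin d) ℝ) (K : Matrix (Fin m) (Fin d) ℝ),
      (At + Bt * K)ᵀ * P + P * (At + Bt * K)
          + (Ct + Dt * K)ᵀ * (Ct + Dt * K)
          + (P * Bw + (Ct + Dt * K)ᵀ * Dw) * F⁻¹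
            * (Bwᵀ * P + Dwᵀ * (Ct + Dt * K))
        = Abarᵀ * P + P * Abar + Q + P * G * P + Kᵀ * R * K
          + Kᵀ * (Bbarᵀ * P + Sᵀ) + (P * Bbar + S) * K :=
  stmt15_general At Ct Bt Dt Bw Dw μ F hF Abar hAbar Bbar hBbar Q hQ R hR S hS G hG
end
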